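/- In the setting of the previous bound, additionally let U′ be any n×n complex matrix and ε ≥ 0 with ‖exp(i·(α·t)·H′) − U′‖ ≤ ε. Then ‖exp(i·t·H) − U′‖ ≤ Real.sqrt (2·δ) · α · t + ε. Precisely: if p, q : Fin d → ℝ are probability vectors with q j > 0 for all j, ∑ j, p j * Real.log (p j / q j) ≤ δ with δ ≥ 0, V : Fin d → Matrix (Fin n) (Fin n) ℂ are unitary, α ≥ 0, t ≥ 0, H := α • ∑ j, (p j) • V j and H′ := ∑ j, (q j) • V j are Hermitian, and ‖exp(i·(α·t)·H′) − U′‖ ≤ ε, then ‖exp(i·t·H) − U′‖ ≤ Real.sqrt (2·δ) · α · t + ε. -/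

import Mathlib

open Matrix NormedSpace Finset
open scoped Matrix.Norms.L2Operator

section KLAux


noncomputable def klg (t : ℝ) : ℝ := 3*(t-1)*(t+5)/(2*(t+2)^2)
noncomputable def klphi (t : ℝ) : ℝ := Real.log t - klg t
noncomputable def klh (t : ℝ) : ℝ := t * Real.log t - t + 1 - 3*(t-1)^2/(2*(t+2))

lemma hasDerivAt_klg {t : ℝ} (ht : 0 < t) : HasDerivAt klg (27/(t+2)^3) t := by
  have hden : (2*(t+2)^2) ≠ 0 := by positivity
  have h1 : HasDerivAt (fun t : ℝ => 3*(t-1)*(t+5)) (3*(t+5) + 3*(t-1)) t := by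
    have := (((hasDerivAt_id t).sub_const 1).const_mul 3).mul ((hasDerivAt_id t).add_const 5)
    exact this.congr_deriv (by simp only [id_eq]; ring)
  have h2 : HasDerivAt (fun t : ℝ => 2*(t+2)^2) (2*(2*(t+2))) t := by
    have := (((hasDerivAt_id t).add_const 2).pow 2).const_mul 2
    exact this.congr_deriv (by simp only [id_eq]; ring)
  have := h1.div h2 hden
  refine this.congr_deriv ?_
  field_simp
  ring

lemma hasDerivAt_klphi {t : ℝ} (ht : 0 < t) :
    HasDerivAt klphi (1/t - 27/(t+2)^3) t := by
  exact ((Real.hasDerivAt_log ht.ne').sub (hasDerivAt_klg ht)).congr_deriv (by rw [one_div])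

lemma hasDerivAt_klh {t : ℝ} (ht : 0 < t) : HasDerivAt klh (klphi t) t := by
  have hden : (2*(t+2)) ≠ 0 := by positivity
  have h1 : HasDerivAt (fun t : ℝ => 3*(t-1)^2) (3*(2*(t-1))) t := by
    have := (((hasDerivAt_id t).sub_const 1).pow 2).const_mul 3
    exact this.congr_deriv (by simp only [id_eq]; ring)
  have h2 : HasDerivAt (fun t : ℝ => 2*(t+2)) 2 t := by
    have := ((hasDerivAt_id t).add_const 2).const_mul 2
    exact this.congr_deriv (by ring)
  have hG : HasDerivAt (fun t : ℝ => 3*(t-1)^2/(2*(t+2))) (klg t) t := by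
    have := h1.div h2 hden
    refine this.congr_deriv ?_
    unfold klg
    field_simp
    ring
  have := (((Real.hasDerivAt_mul_log ht.ne').sub (hasDerivAt_id t)).add_const 1).sub hG
  refine this.congr_deriv ?_
  unfold klphi
  ring

lemma klphi_mono : MonotoneOn klphi (Set.Ioi 0) := by
  apply monotoneOn_of_deriv_nonneg (convex_Ioi 0)
  · exact fun x hx => (hasDerivAt_klphi hx).continuousAt.continuousWithinAt
  · rw [interior_Ioi]
    exact fun x hx => (hasDerivAt_klphi hx).differentiableAt.differentiableWithinAt
  · rw [interior_Ioi]
    intro x hx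
    rw [(hasDerivAt_klphi hx).deriv]
    rw [Set.mem_Ioi] at hx
    rw [sub_nonneg, div_le_div_iff₀ (by positivity) (by positivity)]
    nlinarith [sq_nonneg (x-1), hx.le]

lemma klphi_one : klphi 1 = 0 := by simp [klphi, klg]

lemma klh_one : klh 1 = 0 := by norm_num [klh]

lemma klh_nonneg {t : ℝ} (ht : 0 ≤ t) : 0 ≤ klh t := by
  rcases eq_or_lt_of_le ht with h | h
  · norm_num [klh, ← h]
  rcases le_total t 1 with h1 | h1
  · have hanti : AntitoneOn klh (Set.Ioc 0 1) := by
      apply antitoneOn_of_deriv_nonpos (convex_Ioc 0 1)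
      · exact fun x hx => (hasDerivAt_klh hx.1).continuousAt.continuousWithinAt
      · rw [interior_Ioc]
        exact fun x hx => (hasDerivAt_klh hx.1).differentiableAt.differentiableWithinAt
      · rw [interior_Ioc]
        intro x hx
        rw [(hasDerivAt_klh hx.1).deriv]
        have := klphi_mono (Set.mem_Ioi.2 hx.1) (Set.mem_Ioi.2 one_pos) hx.2.le
        rw [klphi_one] at this
        exact this
    have := hanti (Set.mem_Ioc.2 ⟨h, h1⟩) (Set.mem_Ioc.2 ⟨one_pos, le_refl 1⟩) h1
    rwa [klh_one] at this
  · have hmono : MonotoneOn klh (Set.Ici 1) := by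
      apply monotoneOn_of_deriv_nonneg (convex_Ici 1)
      · exact fun x hx => (hasDerivAt_klh (lt_of_lt_of_le one_pos hx)).continuousAt.continuousWithinAt
      · rw [interior_Ici]
        exact fun x hx => (hasDerivAt_klh (lt_trans one_pos hx)).differentiableAt.differentiableWithinAt
      · rw [interior_Ici]
        intro x hx
        rw [(hasDerivAt_klh (lt_trans one_pos hx)).deriv]
        have := klphi_mono (Set.mem_Ioi.2 one_pos) (Set.mem_Ioi.2 (lt_trans one_pos hx)) hx.le
        rwa [klphi_one] at this
    have := hmono (Set.mem_Ici.2 (le_refl 1)) (Set.mem_Ici.2 h1) h1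
    rwa [klh_one] at this

lemma kl_pointwise {t : ℝ} (ht : 0 ≤ t) :
    3*(t-1)^2/(2*(t+2)) ≤ t * Real.log t - t + 1 := by
  have := klh_nonneg ht
  unfold klh at this
  linarith

lemma kl_pointwise2 {x y : ℝ} (hx : 0 ≤ x) (hy : 0 < y) :
    3*(x-y)^2/(2*(x+2*y)) ≤ x * Real.log (x/y) - x + y := by
  obtain ⟨t, ht0, rfl⟩ : ∃ t, 0 ≤ t ∧ x = t * y :=
    ⟨x / y, div_nonneg hx hy.le, (div_mul_cancel₀ x hy.ne').symm⟩
  rw [mul_div_cancel_right₀ _ hy.ne']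
  have h2 := mul_le_mul_of_nonneg_left (kl_pointwise ht0) hy.le
  have ht2 : t + 2 > 0 := by linarith
  calc 3*(t*y-y)^2/(2*(t*y+2*y)) = y * (3*(t-1)^2/(2*(t+2))) := by
        field_simp
    _ ≤ y * (t * Real.log t - t + 1) := h2
    _ = (t*y) * Real.log t - t*y + y := by ring

lemma pinsker {d : ℕ} (p q : Fin d → ℝ)
    (hp : ∀ j, 0 ≤ p j) (hpsum : ∑ j, p j = 1)
    (hq : ∀ j, 0 < q j) (hqsum : ∑ j, q j = 1)
    {δ : ℝ} (hδ : 0 ≤ δ) (hKL : ∑ j, p j * Real.log (p j / q j) ≤ δ) :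
    ∑ j, |p j - q j| ≤ Real.sqrt (2 * δ) := by
  have key : (∑ j, |p j - q j|) ^ 2 ≤ 2 * δ := by
    have hcs := Finset.sum_sq_le_sum_mul_sum_of_sq_eq_mul Finset.univ
      (r := fun j => |p j - q j|)
      (f := fun j => 3*(p j - q j)^2/(2*(p j + 2 * q j)))
      (g := fun j => 2*(p j + 2 * q j)/3)
      (fun j _ => div_nonneg (by positivity) (by have := hp j; have := hq j; linarith))
      (fun j _ => div_nonneg (by have := hp j; have := hq j; linarith) (by norm_num))
      (fun j _ => by
        have : p j + 2 * q j > 0 := by have := hp j; have := hq j; linarith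
        rw [sq_abs]
        field_simp
        exact (mul_div_cancel_right₀ _ (by linarith)).symm)
    have hsum2 : ∑ j, 2*(p j + 2 * q j)/3 = 2 := by
      simp only [mul_add, ← Finset.sum_div, Finset.sum_add_distrib, ← Finset.mul_sum]
      rw [hpsum, hqsum]; norm_num
    have hsum1 : ∑ j, 3*(p j - q j)^2/(2*(p j + 2 * q j)) ≤ δ := by
      have step : ∀ j, 3*(p j - q j)^2/(2*(p j + 2 * q j)) ≤
          p j * Real.log (p j / q j) - p j + q j := fun j => by
        have := kl_pointwise2 (hp j) (hq j)
        convert this using 3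
      calc ∑ j, 3*(p j - q j)^2/(2*(p j + 2 * q j))
          ≤ ∑ j, (p j * Real.log (p j / q j) - p j + q j) :=
            Finset.sum_le_sum fun j _ => step j
        _ = ∑ j, p j * Real.log (p j / q j) := by
            rw [Finset.sum_add_distrib, Finset.sum_sub_distrib, hpsum, hqsum]; ring
        _ ≤ δ := hKL
    calc (∑ j, |p j - q j|) ^ 2 ≤ _ * _ := hcs
      _ ≤ δ * 2 := by
          apply mul_le_mul hsum1 (le_of_eq hsum2) (by positivity)  hδ
      _ = 2 * δ := by ring
  have h0 : 0 ≤ ∑ j, |p j - q j| := Finset.sum_nonneg fun j _ => abs_nonneg _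
  calc ∑ j, |p j - q j| = Real.sqrt ((∑ j, |p j - q j|)^2) := (Real.sqrt_sq h0).symm
    _ ≤ Real.sqrt (2*δ) := Real.sqrt_le_sqrt key


lemma unitary_norm_le {n : ℕ} {U : Matrix (Fin n) (Fin n) ℂ}
    (hU : U ∈ Matrix.unitaryGroup (Fin n) ℂ) : ‖U‖ ≤ 1 := by
  have h1 : ‖(1 : Matrix (Fin n) (Fin n) ℂ)‖ ≤ 1 := by
    rw [Matrix.cstar_norm_def]
    rw [show (toEuclideanCLM (n := Fin n) (𝕜 := ℂ)) 1 = 1 from map_one _]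
    exact ContinuousLinearMap.norm_id_le
  have h2 : ‖U‖ * ‖U‖ = ‖Uᴴ * U‖ := (Matrix.l2_opNorm_conjTranspose_mul_self U).symm
  rw [← Matrix.star_eq_conjTranspose, hU.1] at h2
  nlinarith [norm_nonneg U]

lemma exp_unitary_norm_le {n : ℕ} (s : ℝ) {M : Matrix (Fin n) (Fin n) ℂ} (hM : Mᴴ = -M) :
    ‖NormedSpace.exp (s • M)‖ ≤ 1 := by
  apply unitary_norm_le
  have hmem : (s • M) ∈ skewAdjoint (Matrix (Fin n) (Fin n) ℂ) := by
    rw [skewAdjoint.mem_iff]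
    show (s • M)ᴴ = -(s • M)
    rw [Matrix.conjTranspose_smul, hM, star_trivial, smul_neg]
  letI : NormedAlgebra ℚ (Matrix (Fin n) (Fin n) ℂ) := NormedAlgebra.restrictScalars ℚ ℂ _
  exact exp_mem_unitary_of_mem_skewAdjoint hmem

lemma exp_sub_exp_le {n : ℕ} {A B : Matrix (Fin n) (Fin n) ℂ}
    (hA : Aᴴ = -A) (hB : Bᴴ = -B) :
    ‖NormedSpace.exp A - NormedSpace.exp B‖ ≤ ‖A - B‖ := by
  have hexp : (NormedSpace.exp : Matrix (Fin n) (Fin n) ℂ → _) = NormedSpace.exp := rfl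
  set f : ℝ → Matrix (Fin n) (Fin n) ℂ :=
    fun s => NormedSpace.exp (s • A) * NormedSpace.exp ((1-s) • B) with hf
  set f' : ℝ → Matrix (Fin n) (Fin n) ℂ :=
    fun s => NormedSpace.exp (s • A) * (A - B) * NormedSpace.exp ((1-s) • B) with hf'
  have hd : ∀ s : ℝ, HasDerivAt f (f' s) s := by
    intro s
    have h1 : HasDerivAt (fun u : ℝ => NormedSpace.exp (u • A)) (NormedSpace.exp (s • A) * A) s :=
      hasDerivAt_exp_smul_const A s
    have h2 : HasDerivAt (fun u : ℝ => NormedSpace.exp ((1-u) • B))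
        (-(NormedSpace.exp ((1-s) • B) * B)) s := by
      have hb : HasDerivAt (fun u : ℝ => NormedSpace.exp (u • B))
          (NormedSpace.exp ((1-s) • B) * B) (1-s) := hasDerivAt_exp_smul_const B (1-s)
      have hlin : HasDerivAt (fun u : ℝ => 1 - u) (-1) s := (hasDerivAt_id s).const_sub 1
      exact (hb.scomp s hlin).congr_deriv (by simp)
    have hc : Commute B (NormedSpace.exp ((1-s) • B)) :=
      (((Commute.refl B).smul_right (1-s)).exp_right)
    have := h1.mul h2
    refine this.congr_deriv ?_
    rw [hf']
    simp only []
    rw [← hc.eq]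
    noncomm_ring
  have hbound : ∀ s : ℝ, ‖f' s‖ ≤ ‖A - B‖ := by
    intro s
    calc ‖f' s‖ ≤ ‖NormedSpace.exp (s • A) * (A - B)‖ * ‖NormedSpace.exp ((1-s) • B)‖ := norm_mul_le _ _
      _ ≤ ‖NormedSpace.exp (s • A)‖ * ‖A - B‖ * ‖NormedSpace.exp ((1-s) • B)‖ := by
          gcongr; exact norm_mul_le _ _
      _ ≤ 1 * ‖A - B‖ * 1 := by
          apply mul_le_mul (mul_le_mul (exp_unitary_norm_le s hA) le_rfl (norm_nonneg _) zero_le_one)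
            (exp_unitary_norm_le (1-s) hB) (norm_nonneg _)
          positivity
      _ = ‖A - B‖ := by ring
  have hmvt := Convex.norm_image_sub_le_of_norm_hasDerivWithin_le
    (fun x (_ : x ∈ Set.univ) => (hd x).hasDerivWithinAt) (fun x _ => hbound x) convex_univ
    (Set.mem_univ (0:ℝ)) (Set.mem_univ (1:ℝ))
  have hf1 : f 1 = NormedSpace.exp A := by
    rw [hf]; simp [exp_zero, hexp]
  have hf0 : f 0 = NormedSpace.exp B := by
    rw [hf]; simp [exp_zero, hexp]
  rw [hf1, hf0] at hmvt
  simpa using hmvt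

end KLAux

/-- Total error bound for an algorithm `U'` that `ε`-approximates the time evolution under
the approximated block encoding: under the hypotheses of the previous bound, if moreover
`‖exp(i(αt)H') - U'‖ ≤ ε`, then `‖exp(itH) - U'‖ ≤ √(2δ)·α·t + ε`. -/
theorem time_evolution_total_error_bound {d n : ℕ}
    (p q : Fin d → ℝ)
    (hp : ∀ j, 0 ≤ p j) (hpsum : ∑ j, p j = 1)
    (hq : ∀ j, 0 < q j) (hqsum : ∑ j, q j = 1)
    (δ : ℝ) (hδ : 0 ≤ δ)
    (hKL : ∑ j, p j * Real.log (p j / q j) ≤ δ)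
    (V : Fin d → Matrix (Fin n) (Fin n) ℂ)
    (hV : ∀ j, V j ∈ Matrix.unitaryGroup (Fin n) ℂ)
    (α t : ℝ) (hα : 0 ≤ α) (ht : 0 ≤ t)
    (H H' : Matrix (Fin n) (Fin n) ℂ)
    (hHdef : H = α • ∑ j, (p j) • V j) (hH'def : H' = ∑ j, (q j) • V j)
    (hH : H.IsHermitian) (hH' : H'.IsHermitian)
    (U' : Matrix (Fin n) (Fin n) ℂ) (ε : ℝ) (hε : 0 ≤ ε)
    (hU' : ‖NormedSpace.exp ((Complex.I * (α * t)) • H') - U'‖ ≤ ε) :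
    ‖NormedSpace.exp ((Complex.I * t) • H) - U'‖ ≤ Real.sqrt (2 * δ) * α * t + ε := by
  set A : Matrix (Fin n) (Fin n) ℂ := (Complex.I * t) • H with hA
  set B : Matrix (Fin n) (Fin n) ℂ := (Complex.I * (α * t)) • H' with hB
  have hskew : ∀ (c : ℝ) (X : Matrix (Fin n) (Fin n) ℂ), X.IsHermitian →
      ((Complex.I * c) • X)ᴴ = -((Complex.I * c) • X) := by
    intro c X hX
    rw [Matrix.conjTranspose_smul, hX.eq, Complex.star_def, _root_.map_mul, Complex.conj_I,
      Complex.conj_ofReal, neg_mul, neg_smul]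
  -- A - B as a single sum
  have hsmul : ∀ (r : ℝ) (c : ℂ) (X : Matrix (Fin n) (Fin n) ℂ),
      c • (r • X) = (c * r) • X := by
    intro r c X
    rw [← algebraMap_smul ℂ r X, smul_smul]
    norm_num
  have hAB : A - B = (Complex.I * (α * t)) • ∑ j, (p j - q j) • V j := by
    rw [hA, hB, hHdef, hH'def, hsmul]
    have : Complex.I * ↑t * ↑α = Complex.I * ((α:ℂ) * t) := by ring
    rw [this, ← smul_sub, ← Finset.sum_sub_distrib]
    congr 1
    refine Finset.sum_congr rfl fun j _ => (sub_smul _ _ _).symm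
  have hABnorm : ‖A - B‖ ≤ (α * t) * ∑ j, |p j - q j| := by
    rw [hAB, norm_smul]
    have h1 : ‖Complex.I * ((α : ℂ) * t)‖ = α * t := by
      simp [norm_mul, Complex.norm_real, abs_of_nonneg hα, abs_of_nonneg ht]
    rw [h1]
    apply mul_le_mul_of_nonneg_left _ (mul_nonneg hα ht)
    calc ‖∑ j, (p j - q j) • V j‖ ≤ ∑ j, ‖(p j - q j) • V j‖ := norm_sum_le _ _
      _ ≤ ∑ j, |p j - q j| := by
          apply Finset.sum_le_sum
          intro j _
          rw [norm_smul, Real.norm_eq_abs]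
          calc |p j - q j| * ‖V j‖ ≤ |p j - q j| * 1 :=
            mul_le_mul_of_nonneg_left (unitary_norm_le (hV j)) (abs_nonneg _)
          _ = |p j - q j| := mul_one _
  -- combine
  have hΔ := pinsker p q hp hpsum hq hqsum hδ hKL
  have hΔ0 : 0 ≤ ∑ j, |p j - q j| := Finset.sum_nonneg fun j _ => abs_nonneg _
  have hmain : ‖NormedSpace.exp A - NormedSpace.exp B‖ ≤ ‖A - B‖ := by
    have h2 := hskew (α * t) H' hH'
    rw [show ((α * t : ℝ) : ℂ) = (α : ℂ) * t by norm_cast] at h2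
    exact exp_sub_exp_le (hskew t H hH) h2
  have htri : NormedSpace.exp A - U' = (NormedSpace.exp A - NormedSpace.exp B) + (NormedSpace.exp B - U') := by abel
  calc ‖NormedSpace.exp A - U'‖ ≤ ‖NormedSpace.exp A - NormedSpace.exp B‖ + ‖NormedSpace.exp B - U'‖ := by
        rw [htri]; exact norm_add_le _ _
    _ ≤ ‖A - B‖ + ε := add_le_add hmain hU'
    _ ≤ (α * t) * ∑ j, |p j - q j| + ε := add_le_add_left hABnorm _
    _ ≤ (α * t) * Real.sqrt (2 * δ) + ε := by
        exact add_le_add_left (mul_le_mul_of_nonneg_left hΔ (mul_nonneg hα ht)) _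
    _ = Real.sqrt (2 * δ) * α * t + ε := by ring
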